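/- Let N ≥ 2 be an integer and let A be an n × m matrix over ℤ/Nℤ (n, m ≥ 1) whose entries generate the unit ideal of ℤ/Nℤ. Then there exists a coefficient vector c ∈ (ℤ/Nℤ)ᵐ such that the linear combination A.mulVec c of the columns of A is primitive, i.e. its entries generate the unit ideal of ℤ/Nℤ. -/

import Mathlib

/-!
For each of the finitely many maximal ideals `𝔪` of the ring, some entry `A i j` lies outside `𝔪`.
Distinct maximal ideals are coprime, so the Chinese remainder theorem gives one vector `c` with
`c ≡ e_j (mod 𝔪)` for every `𝔪` at once. Then `(A c)_i ≡ A i j (mod 𝔪)`, so the entries of `A c`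
lie in no maximal ideal and hence generate the unit ideal.
-/

open Function Matrix

namespace Ideal

variable {R : Type*} [CommRing R]

theorem span_range_eq_top_iff_forall_maximalSpectrum {ι : Type*} {v : ι → R} :
    span (Set.range v) = ⊤ ↔ ∀ P : MaximalSpectrum R, ∃ i, v i ∉ P.asIdeal := by
  constructor
  · intro h P
    by_contra! hv
    exact P.isMaximal.ne_top (top_le_iff.mp (h ▸ span_le.mpr (Set.range_subset_iff.mpr hv)))
  · intro h
    by_contra hne
    obtain ⟨P, hP, hle⟩ := exists_le_maximal _ hne
    obtain ⟨i, hi⟩ := h ⟨P, hP⟩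
    exact hi (hle (subset_span (Set.mem_range_self i)))

theorem pairwise_isCoprime_maximalSpectrum :
    Pairwise (IsCoprime on (MaximalSpectrum.asIdeal : MaximalSpectrum R → Ideal R)) :=
  fun P Q hPQ => isCoprime_iff_sup_eq.mpr <|
    P.isMaximal.coprime_of_ne Q.isMaximal (MaximalSpectrum.ext_iff.not.mp hPQ)

theorem exists_forall_sub_mem_maximalSpectrum [Finite (MaximalSpectrum R)] {κ : Type*}
    (x : MaximalSpectrum R → κ → R) : ∃ c : κ → R, ∀ P k, c k - x P k ∈ P.asIdeal := by
  choose c hc using fun k =>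
    exists_forall_sub_mem_ideal pairwise_isCoprime_maximalSpectrum (x · k)
  exact ⟨c, fun P k => hc k P⟩

end Ideal

namespace Matrix

variable {R : Type*} [CommRing R] {ι κ : Type*} [Fintype κ]

theorem mulVec_sub_mulVec_mem (A : Matrix ι κ R) {I : Ideal R} {c d : κ → R}
    (h : ∀ k, c k - d k ∈ I) (i : ι) : (A *ᵥ c) i - (A *ᵥ d) i ∈ I := by
  rw [← Pi.sub_apply, ← mulVec_sub]
  exact I.sum_mem fun k _ => I.mul_mem_left _ (h k)

theorem exists_span_range_mulVec_eq_top [Finite (MaximalSpectrum R)] (A : Matrix ι κ R)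
    (hA : Ideal.span (Set.range fun q : ι × κ => A q.1 q.2) = ⊤) :
    ∃ c : κ → R, Ideal.span (Set.range (A *ᵥ c)) = ⊤ := by
  classical
  choose q hq using Ideal.span_range_eq_top_iff_forall_maximalSpectrum.mp hA
  obtain ⟨c, hc⟩ := Ideal.exists_forall_sub_mem_maximalSpectrum fun P => Pi.single (q P).2 1
  refine ⟨c, Ideal.span_range_eq_top_iff_forall_maximalSpectrum.mpr fun P => ⟨(q P).1, ?_⟩⟩
  have hsub := A.mulVec_sub_mulVec_mem (hc P) (q P).1
  rw [mulVec_single_one] at hsub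
  exact fun hmem => hq P ((Submodule.sub_mem_iff_right _ hmem).mp hsub)

end Matrix

theorem exists_primitive_column_combination_zmod
    {N : ℕ} (hN : 2 ≤ N) {n m : ℕ}
    (A : Matrix (Fin n) (Fin m) (ZMod N))
    (hA : Ideal.span (Set.range fun q : Fin n × Fin m => A q.1 q.2) = ⊤) :
    ∃ c : Fin m → ZMod N,
      Ideal.span (Set.range (A.mulVec c)) = ⊤ := by
  have : NeZero N := ⟨by omega⟩
  exact A.exists_span_range_mulVec_eq_top hA
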